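/- Let Σ = {a,b,c} and let L_ijk = { aⁱbʲcᵏ : i ≠ j, i ≠ k, j ≠ k, and i, j, k ≥ 0 }. There exists a generalized finite automaton G over Σ such that for every word w ∈ Σ*: f_G(w) > 0 if w ∈ L_ijk, and f_G(w) = 0 if w ∉ L_ijk. (Equivalently, L_ijk belongs to the class NQAL of languages recognized by realtime quantum finite automata in nondeterministic mode, which is exactly the class of languages definable by a GFA in this way.) -/
import Mathlib


open Matrix

/-- The alphabet Σ = {a, b, c}. -/
inductive Letter : Type
  | a | b | c
deriving DecidableEq

/-- The language `L_ijk = { aⁱ bʲ cᵏ : i ≠ j, i ≠ k, j ≠ k, i, j, k ≥ 0 }`. -/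
def Lijk (w : List Letter) : Prop :=
  ∃ i j k : ℕ, i ≠ j ∧ i ≠ k ∧ j ≠ k ∧
    w = List.replicate i Letter.a ++ List.replicate j Letter.b ++ List.replicate k Letter.c

namespace LijkAux
def step : Option (ℕ × ℕ × ℕ) → Letter → Option (ℕ × ℕ × ℕ)
  | none, _ => none
  | some (i, j, k), Letter.a => if j = 0 ∧ k = 0 then some (i+1, 0, 0) else none
  | some (i, j, k), Letter.b => if k = 0 then some (i, j+1, 0) else none
  | some (i, j, k), Letter.c => some (i, j, k+1)
def T (α β γ : ℝ) : Letter → Matrix (Fin 3) (Fin 3) ℝ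
  | Letter.a => fun r c => if r = 0 ∧ c = 0 then α else 0
  | Letter.b => fun r c => if r = 1 ∧ c ≠ 2 then β else 0
  | Letter.c => fun r c => if r = 2 then γ else 0
def ph (j k : ℕ) : Fin 3 := if k ≠ 0 then 2 else if j ≠ 0 then 1 else 0
def sv (α β γ : ℝ) : Option (ℕ × ℕ × ℕ) → (Fin 3 → ℝ)
  | none => 0
  | some (i, j, k) => fun r => if r = ph j k then α^i * β^j * γ^k else 0

lemma step_sv (α β γ : ℝ) (o : Option (ℕ×ℕ×ℕ)) (σ : Letter) :
    T α β γ σ *ᵥ sv α β γ o = sv α β γ (step o σ) := by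
  cases o with
  | none => cases σ <;> simp [sv, step]
  | some t =>
    obtain ⟨i, j, k⟩ := t
    cases σ <;>
      rcases eq_or_ne j 0 with hj | hj <;> rcases eq_or_ne k 0 with hk | hk <;>
      funext r <;>
      simp [sv, step, T, ph, mulVec, dotProduct, Fin.sum_univ_three, hj, hk, pow_succ] <;>
      (try split) <;> (try simp_all) <;> (try ring)

def cls (w : List Letter) : Option (ℕ × ℕ × ℕ) := w.foldl step (some (0,0,0))

lemma cls_append (w : List Letter) (σ : Letter) : cls (w ++ [σ]) = step (cls w) σ := by
  simp [cls, List.foldl_append]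

def e0 : Fin 3 → ℝ := fun r => if r = 0 then 1 else 0

lemma sv_zero (α β γ : ℝ) : sv α β γ (some (0,0,0)) = e0 := by
  funext r; simp [sv, ph, e0]

lemma prod_sv (α β γ : ℝ) (w : List Letter) :
    ((w.reverse.map (T α β γ)).prod) *ᵥ e0 = sv α β γ (cls w) := by
  induction w using List.reverseRecOn with
  | nil => simp [cls, ← sv_zero α β γ]
  | append_singleton l σ ih =>
    rw [cls_append, ← step_sv, List.reverse_append]
    simp only [List.reverse_singleton, List.singleton_append, List.map_cons, List.prod_cons]
    rw [← Matrix.mulVec_mulVec, ih]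

def val (α β γ : ℝ) : Option (ℕ×ℕ×ℕ) → ℝ
  | none => 0
  | some (i,j,k) => α^i * β^j * γ^k

lemma ones_dot_sv (α β γ : ℝ) (o : Option (ℕ×ℕ×ℕ)) :
    (fun _ => (1:ℝ)) ⬝ᵥ sv α β γ o = val α β γ o := by
  cases o with
  | none => simp [sv, val]
  | some t =>
    obtain ⟨i,j,k⟩ := t
    simp [sv, val, dotProduct]

/-! ### Direct sum of 36 copies -/

def cs : Fin 6 → ℝ := ![1, -1, -1, 1, 1, -1]
def wa : Fin 6 → ℝ := ![4, 4, 2, 2, 1, 1]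
def wb : Fin 6 → ℝ := ![2, 1, 4, 1, 4, 2]
def wc : Fin 6 → ℝ := ![1, 2, 1, 4, 2, 4]

abbrev I6 := Fin 6 × Fin 6

def cc (m : I6) : ℝ := cs m.1 * cs m.2
def Wa (m : I6) : ℝ := wa m.1 * wa m.2
def Wb (m : I6) : ℝ := wb m.1 * wb m.2
def Wc (m : I6) : ℝ := wc m.1 * wc m.2

def B (σ : Letter) : Matrix (Fin 3 × I6) (Fin 3 × I6) ℝ :=
  blockDiagonal (fun m => T (Wa m) (Wb m) (Wc m) σ)

lemma prod_B (l : List Letter) :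
    (l.map B).prod = blockDiagonal (fun m => (l.map (T (Wa m) (Wb m) (Wc m))).prod) := by
  induction l with
  | nil => exact (Matrix.blockDiagonal_one (o := I6) (m := Fin 3) (α := ℝ)).symm
  | cons σ l ih => simp [B, ih, Matrix.blockDiagonal_mul]

lemma dot_bd {ι : Type} [Fintype ι] [DecidableEq ι] (c : ι → ℝ)
    (P : ι → Matrix (Fin 3) (Fin 3) ℝ) :
    (fun p : Fin 3 × ι => c p.2) ⬝ᵥ (blockDiagonal P *ᵥ (fun p : Fin 3 × ι => e0 p.1)) =
      ∑ m : ι, c m * ((fun _ => (1:ℝ)) ⬝ᵥ (P m *ᵥ e0)) := by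
  simp only [dotProduct, mulVec, blockDiagonal_apply, Fintype.sum_prod_type, one_mul]
  rw [Finset.sum_comm]
  refine Finset.sum_congr rfl fun m _ => ?_
  rw [Finset.mul_sum]
  refine Finset.sum_congr rfl fun r _ => ?_
  congr 1
  rw [Finset.sum_comm]
  simp [Finset.sum_ite_eq]

def vI : Fin 3 × I6 → ℝ := fun p => e0 p.1
def fI : Fin 3 × I6 → ℝ := fun p => cc p.2

lemma fG_eq (w : List Letter) :
    fI ⬝ᵥ (((w.reverse.map B).prod) *ᵥ vI) =
      ∑ m : I6, cc m * val (Wa m) (Wb m) (Wc m) (cls w) := by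
  rw [prod_B]
  have : fI ⬝ᵥ ((blockDiagonal fun m => (w.reverse.map (T (Wa m) (Wb m) (Wc m))).prod) *ᵥ vI) =
      ∑ m : I6, cc m *
        ((fun _ => (1:ℝ)) ⬝ᵥ ((w.reverse.map (T (Wa m) (Wb m) (Wc m))).prod *ᵥ e0)) :=
    dot_bd cc _
  rw [this]
  refine Finset.sum_congr rfl fun m _ => ?_
  rw [prod_sv, ones_dot_sv]

def Dx (i j k : ℕ) : ℝ := ((2:ℝ)^i - 2^j) * ((2:ℝ)^i - 2^k) * ((2:ℝ)^j - 2^k)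

lemma sum_single (i j k : ℕ) :
    ∑ s : Fin 6, cs s * (wa s)^i * (wb s)^j * (wc s)^k = Dx i j k := by
  have h4 : ∀ n : ℕ, (4:ℝ)^n = 2^n * 2^n := by
    intro n; rw [show (4:ℝ) = 2*2 by norm_num, mul_pow]
  have hcs0 : cs 0 = 1 := rfl
  have hcs1 : cs 1 = -1 := rfl
  have hcs2 : cs 2 = -1 := rfl
  have hcs3 : cs 3 = 1 := rfl
  have hcs4 : cs 4 = 1 := rfl
  have hcs5 : cs 5 = -1 := rfl
  have hwa0 : wa 0 = 4 := rfl
  have hwa1 : wa 1 = 4 := rfl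
  have hwa2 : wa 2 = 2 := rfl
  have hwa3 : wa 3 = 2 := rfl
  have hwa4 : wa 4 = 1 := rfl
  have hwa5 : wa 5 = 1 := rfl
  have hwb0 : wb 0 = 2 := rfl
  have hwb1 : wb 1 = 1 := rfl
  have hwb2 : wb 2 = 4 := rfl
  have hwb3 : wb 3 = 1 := rfl
  have hwb4 : wb 4 = 4 := rfl
  have hwb5 : wb 5 = 2 := rfl
  have hwc0 : wc 0 = 1 := rfl
  have hwc1 : wc 1 = 2 := rfl
  have hwc2 : wc 2 = 1 := rfl
  have hwc3 : wc 3 = 4 := rfl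
  have hwc4 : wc 4 = 2 := rfl
  have hwc5 : wc 5 = 4 := rfl
  simp only [Fin.sum_univ_six, Dx, hcs0, hcs1, hcs2, hcs3, hcs4, hcs5, hwa0, hwa1, hwa2, hwa3, hwa4, hwa5, hwb0, hwb1, hwb2, hwb3, hwb4, hwb5, hwc0, hwc1, hwc2, hwc3, hwc4, hwc5, h4, one_pow]
  ring
lemma sum_val (i j k : ℕ) :
    ∑ m : I6, cc m * val (Wa m) (Wb m) (Wc m) (some (i,j,k)) = (Dx i j k)^2 := by
  have hterm : ∀ m : I6, cc m * val (Wa m) (Wb m) (Wc m) (some (i,j,k)) =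
      (cs m.1 * (wa m.1)^i * (wb m.1)^j * (wc m.1)^k) *
      (cs m.2 * (wa m.2)^i * (wb m.2)^j * (wc m.2)^k) := by
    intro m; simp only [cc, val, Wa, Wb, Wc, mul_pow]; ring
  simp only [hterm]
  rw [Fintype.sum_prod_type, ← sum_single i j k, sq]
  rw [Finset.sum_mul_sum]

lemma cls_canon (i j k : ℕ) :
    cls (List.replicate i Letter.a ++ List.replicate j Letter.b ++ List.replicate k Letter.c)
      = some (i, j, k) := by
  have ha : ∀ n i₀, List.foldl step (some (i₀,0,0)) (List.replicate n Letter.a)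
      = some (i₀+n,0,0) := by
    intro n
    induction n with
    | zero => simp
    | succ n ih =>
      intro i₀
      rw [List.replicate_succ, List.foldl_cons]
      have : step (some (i₀,0,0)) Letter.a = some (i₀+1,0,0) := by simp [step]
      rw [this, ih]
      congr 2
      omega
  have hb : ∀ n i₀ j₀, List.foldl step (some (i₀,j₀,0)) (List.replicate n Letter.b)
      = some (i₀,j₀+n,0) := by
    intro n
    induction n with
    | zero => simp
    | succ n ih =>
      intro i₀ j₀
      rw [List.replicate_succ, List.foldl_cons]
      have : step (some (i₀,j₀,0)) Letter.b = some (i₀,j₀+1,0) := by simp [step]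
      rw [this, ih]
      congr 3
      omega
  have hc : ∀ n i₀ j₀ k₀, List.foldl step (some (i₀,j₀,k₀)) (List.replicate n Letter.c)
      = some (i₀,j₀,k₀+n) := by
    intro n
    induction n with
    | zero => simp
    | succ n ih =>
      intro i₀ j₀ k₀
      rw [List.replicate_succ, List.foldl_cons]
      have : step (some (i₀,j₀,k₀)) Letter.c = some (i₀,j₀,k₀+1) := by simp [step]
      rw [this, ih]
      congr 3
      omega
  rw [cls, List.foldl_append, List.foldl_append, ha, hb, hc]
  simp

lemma canon_of_cls : ∀ w : List Letter, ∀ i j k : ℕ, cls w = some (i,j,k) →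
    w = List.replicate i Letter.a ++ List.replicate j Letter.b ++ List.replicate k Letter.c := by
  intro w
  induction w using List.reverseRecOn with
  | nil =>
    intro i j k h
    simp only [cls, List.foldl_nil, Option.some.injEq, Prod.mk.injEq] at h
    obtain ⟨h1, h2, h3⟩ := h
    subst h1; subst h2; subst h3
    simp
  | append_singleton l σ ih =>
    intro i j k h
    rw [cls_append] at h
    cases hcl : cls l with
    | none => rw [hcl] at h; simp [step] at h
    | some t =>
      obtain ⟨i', j', k'⟩ := t
      rw [hcl] at h
      have hl := ih i' j' k' hcl
      subst hl
      cases σ with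
      | a =>
        rcases eq_or_ne j' 0 with hj | hj
        · rcases eq_or_ne k' 0 with hk | hk
          · subst hj; subst hk
            simp only [step, and_self, if_true, Option.some.injEq, Prod.mk.injEq] at h
            obtain ⟨h1, h2, h3⟩ := h
            subst h1; subst h2; subst h3
            simp [List.replicate_succ']
          · simp [step, hk] at h
        · simp [step, hj] at h
      | b =>
        rcases eq_or_ne k' 0 with hk | hk
        · subst hk
          simp only [step, if_true, Option.some.injEq, Prod.mk.injEq] at h
          obtain ⟨h1, h2, h3⟩ := h
          subst h1; subst h2; subst h3
          simp [List.replicate_succ', List.append_assoc]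
        · simp [step, hk] at h
      | c =>
        simp only [step, Option.some.injEq, Prod.mk.injEq] at h
        obtain ⟨h1, h2, h3⟩ := h
        subst h1; subst h2; subst h3
        simp [List.replicate_succ', List.append_assoc]

lemma two_pow_ne {p q : ℕ} (h : p ≠ q) : (2:ℝ)^p ≠ 2^q := by
  have hsm : StrictMono (fun n : ℕ => (2:ℝ)^n) := fun m n hmn => by
    exact pow_lt_pow_right₀ one_lt_two hmn
  exact fun he => h (hsm.injective he)

end LijkAux

theorem Lijk_in_NQAL_aux :
    ∃ (n : ℕ) (A : Letter → Matrix (Fin n) (Fin n) ℝ) (v0 f : Fin n → ℝ),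
      ∀ w : List Letter,
        (Lijk w → f ⬝ᵥ ((w.reverse.map A).prod *ᵥ v0) > 0) ∧
        (¬ Lijk w → f ⬝ᵥ ((w.reverse.map A).prod *ᵥ v0) = 0) := by
  classical
  let e := Fintype.equivFin (Fin 3 × LijkAux.I6)
  refine ⟨Fintype.card (Fin 3 × LijkAux.I6),
    fun σ => (LijkAux.B σ).submatrix e.symm e.symm,
    LijkAux.vI ∘ e.symm, LijkAux.fI ∘ e.symm, ?_⟩
  have hprod : ∀ l : List Letter,
      (l.map (fun σ => (LijkAux.B σ).submatrix e.symm e.symm)).prod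
        = ((l.map LijkAux.B).prod).submatrix e.symm e.symm := by
    intro l
    induction l with
    | nil => simp [Matrix.submatrix_one_equiv]
    | cons σ l ih => simp [ih, Matrix.submatrix_mul_equiv]
  have hval : ∀ w : List Letter,
      (LijkAux.fI ∘ e.symm) ⬝ᵥ
        (((w.reverse.map (fun σ => (LijkAux.B σ).submatrix e.symm e.symm)).prod) *ᵥ
          (LijkAux.vI ∘ e.symm))
        = ∑ m : LijkAux.I6, LijkAux.cc m *
            LijkAux.val (LijkAux.Wa m) (LijkAux.Wb m) (LijkAux.Wc m) (LijkAux.cls w) := by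
    intro w
    rw [hprod, Matrix.submatrix_mulVec_equiv]
    have hv : (LijkAux.vI ∘ e.symm) ∘ (e.symm.symm) = LijkAux.vI := by
      funext x; simp
    rw [hv]
    have hd : (LijkAux.fI ∘ e.symm) ⬝ᵥ
        (((w.reverse.map LijkAux.B).prod *ᵥ LijkAux.vI) ∘ e.symm)
        = LijkAux.fI ⬝ᵥ ((w.reverse.map LijkAux.B).prod *ᵥ LijkAux.vI) := by
      simp only [dotProduct, Function.comp_apply]
      exact Equiv.sum_comp e.symm fun p =>
        LijkAux.fI p * ((w.reverse.map LijkAux.B).prod *ᵥ LijkAux.vI) p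
    rw [hd, LijkAux.fG_eq]
  intro w
  constructor
  · rintro ⟨i, j, k, hij, hik, hjk, rfl⟩
    rw [hval, LijkAux.cls_canon, LijkAux.sum_val]
    have hD : LijkAux.Dx i j k ≠ 0 :=
      mul_ne_zero (mul_ne_zero (sub_ne_zero.2 (LijkAux.two_pow_ne hij))
        (sub_ne_zero.2 (LijkAux.two_pow_ne hik))) (sub_ne_zero.2 (LijkAux.two_pow_ne hjk))
    exact lt_of_le_of_ne (sq_nonneg _) (Ne.symm (pow_ne_zero 2 hD))
  · intro hw
    rw [hval]
    cases hcl : LijkAux.cls w with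
    | none => simp [LijkAux.val]
    | some t =>
      obtain ⟨i, j, k⟩ := t
      rw [LijkAux.sum_val]
      have hcanon := LijkAux.canon_of_cls w i j k hcl
      have hne : ¬(i ≠ j ∧ i ≠ k ∧ j ≠ k) := fun ⟨h1, h2, h3⟩ => hw ⟨i, j, k, h1, h2, h3, hcanon⟩
      push_neg at hne
      have hD : LijkAux.Dx i j k = 0 := by
        by_cases h1 : i = j
        · subst h1; simp [LijkAux.Dx]
        · by_cases h2 : i = k
          · subst h2; simp [LijkAux.Dx]
          · have h3 := hne h1 h2
            subst h3; simp [LijkAux.Dx]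
      rw [hD]
      norm_num


/-- **`L_ijk` is in NQAL.**
There is a generalized finite automaton `G` over `{a,b,c}` (with `n` states, transition
matrices `A`, initial vector `v0` and final vector `f`; accepting value
`f_G(w) = f · A_{w_m} ⋯ A_{w_1} · v0`) such that `f_G(w) > 0` for `w ∈ L_ijk`
and `f_G(w) = 0` for `w ∉ L_ijk`. -/
theorem Lijk_in_NQAL :
    ∃ (n : ℕ) (A : Letter → Matrix (Fin n) (Fin n) ℝ) (v0 f : Fin n → ℝ),
      ∀ w : List Letter,
        (Lijk w → f ⬝ᵥ ((w.reverse.map A).prod *ᵥ v0) > 0) ∧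
        (¬ Lijk w → f ⬝ᵥ ((w.reverse.map A).prod *ᵥ v0) = 0) := by
  exact Lijk_in_NQAL_aux
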